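/- arXiv:2410.11757 — 3 statements merged into one kernel-verified Lean document; each statement's English description precedes it below -/
import Mathlib

section
/- Let λ_1, λ_2, λ_3 be nonzero column spinors in C^2 and λ̃_1, λ̃_2, λ̃_3 nonzero row spinors in C^2 satisfying momentum conservation λ_1 λ̃_1 + λ_2 λ̃_2 + λ_3 λ̃_3 = 0 (as 2×2 matrices). Then either ⟨12⟩ = ⟨23⟩ = ⟨31⟩ = 0 or [12] = [23] = [31] = 0, where ⟨ij⟩ = det(λ_i λ_j) and [ij] = det(λ̃_i^T λ̃_j^T). -/
/-! Contracting momentum conservation `∑ λᵢ λ̃ᵢ = 0` with `λⱼ` on the left and `λ̃ₖ` on the right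
gives `∑ᵢ ⟨j i⟩ [i k] = 0`. For three particles and `j ≠ k` only one term survives, so
`⟨j l⟩ [l k] = 0` with `l` the third index. Hence if some `⟨j l⟩ ≠ 0`, two of the square brackets
vanish, and the third follows because `[·,·] = 0` is proportionality, a transitive relation on
nonzero spinors. -/

def outer (u v : Fin 2 → ℂ) : Matrix (Fin 2) (Fin 2) ℂ := Matrix.of fun a b => u a * v b

def ang (u v : Fin 2 → ℂ) : ℂ := u 0 * v 1 - u 1 * v 0

@[simp]
lemma ang_self (u : Fin 2 → ℂ) : ang u u = 0 := by
  rw [ang, mul_comm, sub_self]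

lemma ang_anticomm (u v : Fin 2 → ℂ) : ang v u = -ang u v := by
  simp only [ang]
  ring

lemma ang_smul_eq_add (u v w : Fin 2 → ℂ) : ang u w • v = ang u v • w + ang v w • u := by
  ext b
  fin_cases b <;> simp [ang] <;> ring

lemma ang_eq_zero_trans {u v w : Fin 2 → ℂ} (hv : v ≠ 0) (huv : ang u v = 0) (hvw : ang v w = 0) :
    ang u w = 0 := by
  have h := ang_smul_eq_add u v w
  rw [huv, hvw, zero_smul, zero_smul, add_zero, smul_eq_zero] at h
  exact h.resolve_right hv

lemma ang_mul_ang_eq_outer_entries (u x y w : Fin 2 → ℂ) :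
    ang u x * ang y w = u 0 * w 1 * outer x y 1 0 - u 0 * w 0 * outer x y 1 1
      - u 1 * w 1 * outer x y 0 0 + u 1 * w 0 * outer x y 0 1 := by
  simp only [ang, outer, Matrix.of_apply]
  ring

lemma sum_ang_mul_ang_eq_zero {ι : Type*} [Fintype ι] {a b : ι → Fin 2 → ℂ}
    (hmom : ∑ i, outer (a i) (b i) = 0) (u w : Fin 2 → ℂ) :
    ∑ i, ang u (a i) * ang (b i) w = 0 := by
  simp only [ang_mul_ang_eq_outer_entries, Finset.sum_add_distrib, Finset.sum_sub_distrib,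
    ← Finset.mul_sum, ← Matrix.sum_apply, hmom, Matrix.zero_apply, mul_zero, sub_zero, add_zero]

lemma ang_eq_zero_of_outer_add_outer_add_outer_eq_zero {a b c d e f : Fin 2 → ℂ} (hf : f ≠ 0)
    (hmom : outer a b + outer c d + outer e f = 0) (hac : ang a c ≠ 0) :
    ang b d = 0 ∧ ang d f = 0 ∧ ang f b = 0 := by
  have key := sum_ang_mul_ang_eq_zero (a := ![a, c, e]) (b := ![b, d, f])
    (by simpa [Fin.sum_univ_three] using hmom)
  simp only [Fin.sum_univ_three, Matrix.cons_val] at key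
  have hdf : ang d f = 0 := by
    simpa [hac] using key a f
  have hbf : ang b f = 0 := by
    simpa [ang_anticomm a c, hac] using key c f
  have hfb : ang f b = 0 := by
    rw [ang_anticomm, hbf, neg_zero]
  have hfd : ang f d = 0 := by
    rw [ang_anticomm, hdf, neg_zero]
  exact ⟨ang_eq_zero_trans hf hbf hfd, hdf, hfb⟩

theorem stmt4_general (lam lamt : Fin 3 → Fin 2 → ℂ)
    (hlt : ∀ i, lamt i ≠ 0)
    (hmom : ∑ i, outer (lam i) (lamt i) = 0) :
    (ang (lam 0) (lam 1) = 0 ∧ ang (lam 1) (lam 2) = 0 ∧ ang (lam 2) (lam 0) = 0) ∨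
    (ang (lamt 0) (lamt 1) = 0 ∧ ang (lamt 1) (lamt 2) = 0 ∧ ang (lamt 2) (lamt 0) = 0) := by
  rw [Fin.sum_univ_three] at hmom
  by_cases h01 : ang (lam 0) (lam 1) = 0
  · by_cases h12 : ang (lam 1) (lam 2) = 0
    · by_cases h20 : ang (lam 2) (lam 0) = 0
      · exact Or.inl ⟨h01, h12, h20⟩
      · obtain ⟨q20, q01, q12⟩ := ang_eq_zero_of_outer_add_outer_add_outer_eq_zero
          (b := lamt 2) (d := lamt 0) (hlt 1) (by rw [← hmom]; abel) h20
        exact Or.inr ⟨q01, q12, q20⟩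
    · obtain ⟨q12, q20, q01⟩ := ang_eq_zero_of_outer_add_outer_add_outer_eq_zero
        (b := lamt 1) (d := lamt 2) (hlt 0) (by rw [← hmom]; abel) h12
      exact Or.inr ⟨q01, q12, q20⟩
  · exact Or.inr (ang_eq_zero_of_outer_add_outer_add_outer_eq_zero (hlt 2) hmom h01)

theorem stmt4 (lam lamt : Fin 3 → Fin 2 → ℂ)
    (hl : ∀ i, lam i ≠ 0) (hlt : ∀ i, lamt i ≠ 0)
    (hmom : ∑ i, outer (lam i) (lamt i) = 0) :
    (ang (lam 0) (lam 1) = 0 ∧ ang (lam 1) (lam 2) = 0 ∧ ang (lam 2) (lam 0) = 0) ∨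
    (ang (lamt 0) (lamt 1) = 0 ∧ ang (lamt 1) (lamt 2) = 0 ∧ ang (lamt 2) (lamt 0) = 0) :=
  stmt4_general lam lamt hlt hmom
end

section
/- Let Z_1, ..., Z_n ∈ C^4 (n ≥ 4, indices mod n) with ⟨i i+1⟩ ≠ 0 for all i, where ⟨ij⟩ = Z_i^1 Z_j^2 − Z_i^2 Z_j^1. Define λ_i = (Z_i^1, Z_i^2) ∈ C^2 and, for A = 1, 2, λ̃_i^A = (⟨i−1 i⟩ Z_{i+1}^{A+2} + ⟨i+1 i−1⟩ Z_i^{A+2} + ⟨i i+1⟩ Z_{i−1}^{A+2}) / (⟨i−1 i⟩⟨i i+1⟩). Then momentum conservation holds: Σ_{i=1}^n λ_i λ̃_i = 0 as 2×2 matrices. -/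
def tang {n : ℕ} (Z : ZMod n → Fin 4 → ℂ) (i j : ZMod n) : ℂ :=
  Z i 0 * Z j 1 - Z i 1 * Z j 0

/-- The spinor `λᵢ`: the first two coordinates of the twistor `Zᵢ`. -/
def lam {n : ℕ} (Z : ZMod n → Fin 4 → ℂ) (i : ZMod n) : Fin 2 → ℂ :=
  fun A => Z i ⟨A.val, by omega⟩

/-- The spinor `λ̃ᵢ` recovered from the twistors. -/
noncomputable def lamt {n : ℕ} (Z : ZMod n → Fin 4 → ℂ) (i : ZMod n) : Fin 2 → ℂ :=
  fun A =>
    (tang Z (i - 1) i * Z (i + 1) ⟨A.val + 2, by omega⟩ +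
      tang Z (i + 1) (i - 1) * Z i ⟨A.val + 2, by omega⟩ +
      tang Z i (i + 1) * Z (i - 1) ⟨A.val + 2, by omega⟩) /
    (tang Z (i - 1) i * tang Z i (i + 1))

open Matrix

def mu {n : ℕ} (Z : ZMod n → Fin 4 → ℂ) (i : ZMod n) : Fin 2 → ℂ :=
  fun A => Z i ⟨A.val + 2, by omega⟩

noncomputable def edgeTerm {n : ℕ} (Z : ZMod n → Fin 4 → ℂ) (i : ZMod n) :
    Matrix (Fin 2) (Fin 2) ℂ :=
  (tang Z i (i + 1))⁻¹ • (vecMulVec (lam Z i) (mu Z (i + 1)) - vecMulVec (lam Z (i + 1)) (mu Z i))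

theorem sum_sub_comp_sub_eq_zero {G M : Type*} [AddGroup G] [Fintype G] [AddCommGroup M]
    (f : G → M) (g : G) : ∑ x, (f x - f (x - g)) = 0 := by
  rw [Finset.sum_sub_distrib, sub_eq_zero]
  exact ((Equiv.subRight g).sum_comp f).symm

theorem outer_eq_vecMulVec (u v : Fin 2 → ℂ) : outer u v = vecMulVec u v := rfl

theorem tang_lam_schouten {n : ℕ} (Z : ZMod n → Fin 4 → ℂ) (i j k : ZMod n) :
    tang Z i j • lam Z k + tang Z j k • lam Z i + tang Z k i • lam Z j = 0 := by
  funext A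
  fin_cases A <;>
    simp only [tang, lam, Pi.add_apply, Pi.smul_apply, Pi.zero_apply, smul_eq_mul, Fin.zero_eta,
      Fin.mk_one, Fin.isValue, Fin.coe_ofNat_eq_mod, Nat.zero_mod, Nat.mod_succ] <;> ring

theorem lamt_eq_smul {n : ℕ} (Z : ZMod n → Fin 4 → ℂ) (i : ZMod n) :
    lamt Z i = (tang Z (i - 1) i * tang Z i (i + 1))⁻¹ •
      (tang Z (i - 1) i • mu Z (i + 1) + tang Z (i + 1) (i - 1) • mu Z i +
        tang Z i (i + 1) • mu Z (i - 1)) := by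
  funext A
  simp only [lamt, mu, Pi.smul_apply, Pi.add_apply, smul_eq_mul, div_eq_inv_mul]

theorem outer_lam_lamt_eq_edgeTerm_sub {n : ℕ} (Z : ZMod n → Fin 4 → ℂ) (i : ZMod n)
    (hprev : tang Z (i - 1) i ≠ 0) (hnext : tang Z i (i + 1) ≠ 0) :
    outer (lam Z i) (lamt Z i) = edgeTerm Z i - edgeTerm Z (i - 1) := by
  have schouten : tang Z (i + 1) (i - 1) • lam Z i =
      -(tang Z (i - 1) i • lam Z (i + 1) + tang Z i (i + 1) • lam Z (i - 1)) := by
    rw [eq_neg_iff_add_eq_zero, add_comm]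
    exact tang_lam_schouten Z (i - 1) i (i + 1)
  rw [outer_eq_vecMulVec, lamt_eq_smul, edgeTerm, edgeTerm, sub_add_cancel]
  simp only [vecMulVec_smul, vecMulVec_add]
  rw [← smul_vecMulVec (tang Z (i + 1) (i - 1)), schouten]
  simp only [neg_vecMulVec, add_vecMulVec, smul_vecMulVec]
  match_scalars <;> field_simp

theorem stmt10_general (n : ℕ) [NeZero n] (Z : ZMod n → Fin 4 → ℂ)
    (hadj : ∀ i, tang Z i (i + 1) ≠ 0) :
    ∑ i : ZMod n, outer (lam Z i) (lamt Z i) = 0 := by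
  have htelescope : ∀ i, outer (lam Z i) (lamt Z i) = edgeTerm Z i - edgeTerm Z (i - 1) :=
    fun i => outer_lam_lamt_eq_edgeTerm_sub Z i (by simpa using hadj (i - 1)) (hadj i)
  simp only [htelescope]
  exact sum_sub_comp_sub_eq_zero (edgeTerm Z) 1

theorem stmt10 (n : ℕ) (hn : 4 ≤ n) [NeZero n] (Z : ZMod n → Fin 4 → ℂ)
    (hadj : ∀ i, tang Z i (i + 1) ≠ 0) :
    ∑ i : ZMod n, outer (lam Z i) (lamt Z i) = 0 :=
  stmt10_general n Z hadj
end

section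
/- Let Z_1, ..., Z_n ∈ C^4 and χ_1, ..., χ_n ∈ C^4 (n ≥ 4, indices mod n) with ⟨i i+1⟩ = Z_i^1 Z_j^2 − Z_i^2 Z_j^1 ≠ 0 (with j = i+1) for all i. Define λ_i = (Z_i^1, Z_i^2) and η_i^A = (⟨i−1 i⟩ χ_{i+1}^A + ⟨i+1 i−1⟩ χ_i^A + ⟨i i+1⟩ χ_{i−1}^A) / (⟨i−1 i⟩⟨i i+1⟩) for A = 1,...,4. Then Σ_{i=1}^n λ_i η_i = 0, where λ_i η_i denotes the 2×4 outer product matrix. -/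
/-- Outer product of a column 2-vector with a row 4-vector, a 2×4 matrix. -/
def outer24 (u : Fin 2 → ℂ) (v : Fin 4 → ℂ) : Matrix (Fin 2) (Fin 4) ℂ :=
  Matrix.of fun a b => u a * v b

/-- The Grassmann partner `ηᵢ` recovered from the fermionic twistor components `χᵢ`
(taken as ordinary complex vectors, since the identity is multilinear). -/
noncomputable def eta {n : ℕ} (Z : ZMod n → Fin 4 → ℂ) (chi : ZMod n → Fin 4 → ℂ)
    (i : ZMod n) : Fin 4 → ℂ :=
  fun A =>
    (tang Z (i - 1) i * chi (i + 1) A + tang Z (i + 1) (i - 1) * chi i A +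
      tang Z i (i + 1) * chi (i - 1) A) /
    (tang Z (i - 1) i * tang Z i (i + 1))

/-!
After dividing out the brackets, `λᵢ ηᵢ` is a sum of three terms carrying `χᵢ₊₁`, `χᵢ` and `χᵢ₋₁`.
Shifting the summation index in the first and last of them collects the coefficient of each `χᵢ`,
which is `⟨i i+1⟩ λᵢ₋₁ + ⟨i+1 i-1⟩ λᵢ + ⟨i-1 i⟩ λᵢ₊₁` divided by `⟨i-1 i⟩⟨i i+1⟩`; this vanishes by
the Schouten identity for three vectors in `ℂ²`.
-/

open Finset

theorem tang_mul_lam_add_add_eq_zero {n : ℕ} (Z : ZMod n → Fin 4 → ℂ) (i j k : ZMod n)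
    (a : Fin 2) :
    tang Z j k * lam Z i a + tang Z k i * lam Z j a + tang Z i j * lam Z k a = 0 := by
  fin_cases a <;> simp only [tang, lam, Fin.zero_eta, Fin.mk_one] <;> ring

theorem Fintype.sum_add_add_shift {G M : Type*} [AddCommGroup G] [Fintype G] [AddCommMonoid M]
    (f g h : G → M) (c : G) :
    ∑ i, (f i + g i + h i) = ∑ i, (f (i - c) + g i + h (i + c)) := by
  simp only [sum_add_distrib]
  rw [← Equiv.sum_comp (Equiv.subRight c) f, ← Equiv.sum_comp (Equiv.addRight c) h]
  rfl

section

variable {n : ℕ} {Z : ZMod n → Fin 4 → ℂ} (chi : ZMod n → Fin 4 → ℂ)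
  (hadj : ∀ i, tang Z i (i + 1) ≠ 0)
include hadj

theorem lam_mul_eta (i : ZMod n) (a : Fin 2) (b : Fin 4) :
    lam Z i a * eta Z chi i b =
      lam Z i a / tang Z i (i + 1) * chi (i + 1) b +
        tang Z (i + 1) (i - 1) * lam Z i a / (tang Z (i - 1) i * tang Z i (i + 1)) * chi i b +
          lam Z i a / tang Z (i - 1) i * chi (i - 1) b := by
  have hprev : tang Z (i - 1) i ≠ 0 := by simpa using hadj (i - 1)
  have hnext := hadj i
  simp only [eta]
  field_simp

theorem chi_coeff_eq_zero (i : ZMod n) (a : Fin 2) :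
    lam Z (i - 1) a / tang Z (i - 1) i +
        tang Z (i + 1) (i - 1) * lam Z i a / (tang Z (i - 1) i * tang Z i (i + 1)) +
          lam Z (i + 1) a / tang Z i (i + 1) = 0 := by
  have hprev : tang Z (i - 1) i ≠ 0 := by simpa using hadj (i - 1)
  have hnext := hadj i
  have hschouten := tang_mul_lam_add_add_eq_zero Z (i - 1) i (i + 1) a
  field_simp
  linear_combination hschouten

end

theorem stmt11_general (n : ℕ) [NeZero n] (Z chi : ZMod n → Fin 4 → ℂ)
    (hadj : ∀ i, tang Z i (i + 1) ≠ 0) :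
    ∑ i : ZMod n, outer24 (lam Z i) (eta Z chi i) = 0 := by
  ext a b
  simp only [Matrix.sum_apply, outer24, Matrix.of_apply, Matrix.zero_apply,
    lam_mul_eta chi hadj]
  rw [Fintype.sum_add_add_shift _ _ _ 1]
  refine sum_eq_zero fun i _ => ?_
  simp only [sub_add_cancel, add_sub_cancel_right]
  linear_combination chi i b * chi_coeff_eq_zero hadj i a

theorem stmt11 (n : ℕ) (hn : 4 ≤ n) [NeZero n] (Z chi : ZMod n → Fin 4 → ℂ)
    (hadj : ∀ i, tang Z i (i + 1) ≠ 0) :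
    ∑ i : ZMod n, outer24 (lam Z i) (eta Z chi i) = 0 :=
  stmt11_general n Z chi hadj
end
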